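/- arXiv:1306.4875 — 3 statements merged into one kernel-verified Lean document; each statement's English description precedes it below -/
import Mathlib

section
/- Let f : [0,∞) → [0,∞) be continuous, let k be the Dirichlet Green's function, Tu(t) = ∫₀¹ k(t,s) f(u(s)) ds, and K = {u ∈ C[0,1] : u ≥ 0, min_{t∈[1/4,3/4]} u(t) ≥ (1/4)‖u‖}. Suppose there exists ρ > 0 such that f_{ρ/4,ρ} ≥ M, where f_{ρ/4,ρ} = inf{ f(u)/ρ : ρ/4 ≤ u ≤ ρ } and 1/M = inf_{t∈[1/4,3/4]} ∫_{1/4}^{3/4} k(t,s) ds. Then ‖Tu‖ ≥ ‖u‖ for every u ∈ K with ‖u‖ = ρ. -/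
open Set MeasureTheory intervalIntegral

/-- The Green's function of the Dirichlet problem:
`k(t,s) = s(1-t)` if `s ≤ t`, `k(t,s) = t(1-s)` if `s > t`. -/
noncomputable def kD (t s : ℝ) : ℝ := if s ≤ t then s * (1 - t) else t * (1 - s)

/-- The supremum norm `‖u‖ = max_{t ∈ [0,1]} |u(t)|`. -/
noncomputable def supNorm (u : ℝ → ℝ) : ℝ := sSup ((fun t => |u t|) '' Icc (0:ℝ) 1)

/-- Membership in the Guo cone
`K = {u ∈ C[0,1] : u ≥ 0, min_{t∈[1/4,3/4]} u(t) ≥ (1/4)‖u‖}`. -/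
def inConeK (u : ℝ → ℝ) : Prop :=
  ContinuousOn u (Icc 0 1) ∧ (∀ t ∈ Icc (0:ℝ) 1, 0 ≤ u t) ∧
    (1/4 : ℝ) * supNorm u ≤ sInf (u '' Icc (1/4 : ℝ) (3/4))

/-- The constant `M` with `1/M = inf_{t∈[1/4,3/4]} ∫_{1/4}^{3/4} k(t,s) ds`. -/
noncomputable def MD : ℝ :=
  (sInf ((fun t => ∫ s in (1/4 : ℝ)..(3/4), kD t s) '' Icc (1/4 : ℝ) (3/4)))⁻¹


lemma kD_eq_min (t s : ℝ) : kD t s = min (s * (1 - t)) (t * (1 - s)) := by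
  unfold kD
  split_ifs with h
  · exact (min_eq_left (by nlinarith)).symm
  · exact (min_eq_right (by nlinarith [not_le.mp h])).symm

lemma kD_cont (t : ℝ) : Continuous (kD t) := by
  have : kD t = fun s => min (s * (1 - t)) (t * (1 - s)) := funext (kD_eq_min t)
  rw [this]; fun_prop

lemma kD_nonneg {t s : ℝ} (ht : t ∈ Icc (0:ℝ) 1) (hs : s ∈ Icc (0:ℝ) 1) : 0 ≤ kD t s := by
  rw [kD_eq_min]
  exact le_min (mul_nonneg hs.1 (by linarith [ht.2])) (mul_nonneg ht.1 (by linarith [hs.2]))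

lemma kD_le_one {t s : ℝ} (ht : t ∈ Icc (0:ℝ) 1) (hs : s ∈ Icc (0:ℝ) 1) : kD t s ≤ 1 := by
  rw [kD_eq_min]
  calc min (s * (1 - t)) (t * (1 - s)) ≤ s * (1 - t) := min_le_left _ _
    _ ≤ 1 := by nlinarith [ht.1, ht.2, hs.1, hs.2]

lemma g_eval {t : ℝ} (ht : t ∈ Icc (1/4:ℝ) (3/4)) :
    ∫ s in (1/4:ℝ)..(3/4), kD t s = (-16*t^2 + 16*t - 1)/32 := by
  obtain ⟨h1, h2⟩ := ht
  rw [← integral_add_adjacent_intervals (a := (1/4:ℝ)) (b := t) (c := (3/4:ℝ))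
    ((kD_cont t).intervalIntegrable _ _) ((kD_cont t).intervalIntegrable _ _)]
  have e1 : ∫ s in (1/4:ℝ)..t, kD t s = ∫ s in (1/4:ℝ)..t, s * (1 - t) := by
    apply integral_congr
    intro s hs
    rw [uIcc_of_le h1] at hs
    exact if_pos hs.2
  have e2 : ∫ s in t..(3/4:ℝ), kD t s = ∫ s in t..(3/4:ℝ), t * (1 - s) := by
    apply integral_congr
    intro s hs
    rw [uIcc_of_le h2] at hs
    rw [kD_eq_min]
    exact min_eq_right (by nlinarith [hs.1])
  rw [e1, e2]
  simp [intervalIntegral.integral_mul_const, intervalIntegral.integral_const_mul, integral_id, mul_comm,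
    intervalIntegral.integral_sub intervalIntegrable_const (intervalIntegral.intervalIntegrable_id)]
  ring

lemma MD_eq : MD = 16 := by
  have hL : IsLeast ((fun t => ∫ s in (1/4 : ℝ)..(3/4), kD t s) '' Icc (1/4 : ℝ) (3/4)) (1/16) := by
    constructor
    · refine ⟨1/4, by norm_num, ?_⟩
      show (∫ s in (1/4 : ℝ)..(3/4), kD (1/4) s) = 1/16
      rw [g_eval (by norm_num)]; norm_num
    · rintro x ⟨t, ht, rfl⟩
      show (1:ℝ)/16 ≤ ∫ s in (1/4 : ℝ)..(3/4), kD t s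
      rw [g_eval ht]
      nlinarith [mul_nonneg (by linarith [ht.1] : (0:ℝ) ≤ 4*t - 1) (by linarith [ht.2] : (0:ℝ) ≤ 3 - 4*t)]
  unfold MD
  rw [hL.csInf_eq]
  norm_num

/-- If `f_{ρ/4,ρ} ≥ M` then `‖Tu‖ ≥ ‖u‖` for every `u ∈ K` with `‖u‖ = ρ`. -/
theorem stmt_7 (f : ℝ → ℝ) (hf : ContinuousOn f (Ici 0))
    (hfpos : ∀ x ∈ Ici (0:ℝ), 0 ≤ f x)
    (ρ : ℝ) (hρ : 0 < ρ)
    (hfρ : MD ≤ sInf ((fun x => f x / ρ) '' Icc (ρ/4) ρ)) :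
    ∀ u : ℝ → ℝ, inConeK u → supNorm u = ρ →
      supNorm u ≤ supNorm (fun t => ∫ s in (0:ℝ)..1, kD t s * f (u s)) := by
  rintro u ⟨hu, hupos, hucone⟩ hunorm
  rw [MD_eq] at hfρ
  -- f ∘ u is continuous on [0,1]
  have hfu : ContinuousOn (fun s => f (u s)) (Icc 0 1) :=
    hf.comp hu (fun x hx => hupos x hx)
  -- integrand continuity / integrability
  have hFcont : ∀ t : ℝ, ContinuousOn (fun s => kD t s * f (u s)) (Icc 0 1) :=
    fun t => ((kD_cont t).continuousOn).mul hfu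
  have hFint : ∀ t a b : ℝ, uIcc a b ⊆ Icc 0 1 →
      IntervalIntegrable (fun s => kD t s * f (u s)) volume a b :=
    fun t a b hsub => ((hFcont t).mono hsub).intervalIntegrable
  -- u s ≤ ρ on [0,1]
  have hbu : BddAbove ((fun t => |u t|) '' Icc (0:ℝ) 1) :=
    isCompact_Icc.bddAbove_image hu.abs
  have huleρ : ∀ s ∈ Icc (0:ℝ) 1, u s ≤ ρ := fun s hs => by
    calc u s ≤ |u s| := le_abs_self _
      _ ≤ supNorm u := le_csSup hbu ⟨s, hs, rfl⟩
      _ = ρ := hunorm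
  -- u s ≥ ρ/4 on [1/4,3/4]
  have hsub34 : Icc (1/4:ℝ) (3/4) ⊆ Icc 0 1 := Icc_subset_Icc (by norm_num) (by norm_num)
  have hugeρ : ∀ s ∈ Icc (1/4:ℝ) (3/4), ρ/4 ≤ u s := fun s hs => by
    have hbb : BddBelow (u '' Icc (1/4:ℝ) (3/4)) :=
      ⟨0, by rintro x ⟨y, hy, rfl⟩; exact hupos y (hsub34 hy)⟩
    calc ρ/4 = 1/4 * supNorm u := by rw [hunorm]; ring
      _ ≤ sInf (u '' Icc (1/4:ℝ) (3/4)) := hucone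
      _ ≤ u s := csInf_le hbb ⟨s, hs, rfl⟩
  -- f (u s) ≥ 16 ρ on [1/4,3/4]
  have hflb : ∀ s ∈ Icc (1/4:ℝ) (3/4), 16 * ρ ≤ f (u s) := fun s hs => by
    have hmem : u s ∈ Icc (ρ/4) ρ := ⟨hugeρ s hs, huleρ s (hsub34 hs)⟩
    have hbb : BddBelow ((fun x => f x / ρ) '' Icc (ρ/4) ρ) := by
      refine ⟨0, ?_⟩
      rintro x ⟨y, hy, rfl⟩
      exact div_nonneg (hfpos y (le_trans (by positivity) hy.1)) hρ.le
    have h16 : (16:ℝ) ≤ f (u s) / ρ :=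
      le_trans hfρ (csInf_le hbb ⟨u s, hmem, rfl⟩)
    rw [le_div_iff₀ hρ] at h16
    linarith
  -- nonnegativity of integrand for t ∈ [0,1]
  have hFnn : ∀ t ∈ Icc (0:ℝ) 1, ∀ s ∈ Icc (0:ℝ) 1, 0 ≤ kD t s * f (u s) :=
    fun t ht s hs => mul_nonneg (kD_nonneg ht hs) (hfpos _ (hupos s hs))
  have hhalf : (1/2:ℝ) ∈ Icc (0:ℝ) 1 := by norm_num
  -- the key lower bound at t = 1/2
  have hmid : (3/2) * ρ ≤ ∫ s in (0:ℝ)..1, kD (1/2) s * f (u s) := by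
    have i1 : IntervalIntegrable (fun s => kD (1/2) s * f (u s)) volume 0 (1/4) :=
      hFint _ _ _ (by rw [uIcc_of_le (by norm_num)]; exact Icc_subset_Icc (by norm_num) (by norm_num))
    have i2 : IntervalIntegrable (fun s => kD (1/2) s * f (u s)) volume (1/4) (3/4) :=
      hFint _ _ _ (by rw [uIcc_of_le (by norm_num)]; exact hsub34)
    have i3 : IntervalIntegrable (fun s => kD (1/2) s * f (u s)) volume (3/4) 1 :=
      hFint _ _ _ (by rw [uIcc_of_le (by norm_num)]; exact Icc_subset_Icc (by norm_num) (by norm_num))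
    have split : ∫ s in (0:ℝ)..1, kD (1/2) s * f (u s)
        = (∫ s in (0:ℝ)..(1/4), kD (1/2) s * f (u s))
          + ((∫ s in (1/4:ℝ)..(3/4), kD (1/2) s * f (u s))
            + ∫ s in (3/4:ℝ)..1, kD (1/2) s * f (u s)) := by
      rw [integral_add_adjacent_intervals i2 i3,
        integral_add_adjacent_intervals i1 (i2.trans i3)]
    have n1 : 0 ≤ ∫ s in (0:ℝ)..(1/4), kD (1/2) s * f (u s) :=
      integral_nonneg (by norm_num) (fun x hx => hFnn _ hhalf x ⟨hx.1, by linarith [hx.2]⟩)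
    have n3 : 0 ≤ ∫ s in (3/4:ℝ)..1, kD (1/2) s * f (u s) :=
      integral_nonneg (by norm_num) (fun x hx => hFnn _ hhalf x ⟨by linarith [hx.1], hx.2⟩)
    have hmono : ∫ s in (1/4:ℝ)..(3/4), kD (1/2) s * (16 * ρ)
        ≤ ∫ s in (1/4:ℝ)..(3/4), kD (1/2) s * f (u s) := by
      apply integral_mono_on (by norm_num)
        (((kD_cont (1/2)).mul continuous_const).intervalIntegrable _ _) i2
      intro x hx
      exact mul_le_mul_of_nonneg_left (hflb x hx) (kD_nonneg hhalf (hsub34 hx))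
    have hval : ∫ s in (1/4:ℝ)..(3/4), kD (1/2) s * (16 * ρ) = (3/2) * ρ := by
      rw [intervalIntegral.integral_mul_const, g_eval (by norm_num)]
      ring
    rw [split]
    rw [hval] at hmono
    linarith
  -- bound for BddAbove
  obtain ⟨C, hC⟩ : BddAbove ((fun s => f (u s)) '' Icc (0:ℝ) 1) :=
    isCompact_Icc.bddAbove_image hfu
  have hTbdd : BddAbove ((fun t => |∫ s in (0:ℝ)..1, kD t s * f (u s)|) '' Icc (0:ℝ) 1) := by
    refine ⟨C, ?_⟩
    rintro x ⟨t, ht, rfl⟩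
    have habs : |∫ s in (0:ℝ)..1, kD t s * f (u s)| ≤ ∫ s in (0:ℝ)..1, |kD t s * f (u s)| :=
      intervalIntegral.abs_integral_le_integral_abs (by norm_num)
    have hint : ∫ s in (0:ℝ)..1, |kD t s * f (u s)| ≤ ∫ s in (0:ℝ)..1, C := by
      apply integral_mono_on (by norm_num)
        ((hFint t 0 1 (by rw [uIcc_of_le (by norm_num)])).abs) intervalIntegrable_const
      intro s hs
      rw [abs_of_nonneg (hFnn t ht s hs)]
      calc kD t s * f (u s) ≤ 1 * f (u s) :=
            mul_le_mul_of_nonneg_right (kD_le_one ht hs) (hfpos _ (hupos s hs))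
        _ = f (u s) := one_mul _
        _ ≤ C := hC ⟨s, hs, rfl⟩
    simpa using le_trans habs hint
  -- conclude
  rw [hunorm]
  calc ρ ≤ (3/2) * ρ := by linarith
    _ ≤ ∫ s in (0:ℝ)..1, kD (1/2) s * f (u s) := hmid
    _ ≤ |∫ s in (0:ℝ)..1, kD (1/2) s * f (u s)| := le_abs_self _
    _ ≤ supNorm (fun t => ∫ s in (0:ℝ)..1, kD t s * f (u s)) :=
        le_csSup hTbdd ⟨1/2, hhalf, rfl⟩
end

section
/- For every λ ≥ 256 there exists a nontrivial (not identically zero) twice continuously differentiable function u_λ : [0,1] → [0,∞) satisfying u_λ''(t) + λ u_λ(t)² = 0 for all t ∈ (0,1), u_λ(0) = u_λ(1) = 0, and 8/λ ≤ ‖u_λ‖ ≤ 1, where ‖u_λ‖ = max_{t∈[0,1]} |u_λ(t)|. -/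
open Set

open MeasureTheory intervalIntegral in
section

noncomputable def S9g (y : ℝ) : ℝ := Real.sqrt (2/3 * (1 - y^3))
noncomputable def S9h (y : ℝ) : ℝ := (S9g y)⁻¹
noncomputable def S9F (y : ℝ) : ℝ := ∫ s in (0:ℝ)..y, S9h s
noncomputable def S9T : ℝ := S9F 1

lemma S9g_nonneg (y : ℝ) : 0 ≤ S9g y := Real.sqrt_nonneg _

lemma S9g_pos {y : ℝ} (hy : y < 1) : 0 < S9g y := by
  apply Real.sqrt_pos.2
  nlinarith [sq_nonneg (y + 1/2), sq_nonneg y, sq_nonneg (y-1), mul_pos (mul_pos (sub_pos.2 hy) (sub_pos.2 hy)) (by nlinarith [sq_nonneg (2*y+1)] : (0:ℝ) < y^2 + y + 1)]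

lemma S9g_one : S9g 1 = 0 := by simp [S9g]

lemma S9g_zero : S9g 0 = Real.sqrt (2/3) := by norm_num [S9g]

lemma S9g_cont : Continuous S9g := by
  apply Real.continuous_sqrt.comp; continuity

lemma S9g_sq {y : ℝ} (hy : y ≤ 1) : S9g y ^ 2 = 2/3 * (1 - y^3) := by
  rw [S9g, Real.sq_sqrt]
  nlinarith [sq_nonneg (y + 1/2), sq_nonneg y, mul_nonneg (mul_nonneg (sub_nonneg.2 hy) (sub_nonneg.2 hy)) (by nlinarith [sq_nonneg (2*y+1)] : (0:ℝ) ≤ y^2 + y + 1)]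

lemma S9g_le {y : ℝ} (hy : 0 ≤ y) : S9g y ≤ Real.sqrt (2/3) := by
  apply Real.sqrt_le_sqrt; nlinarith [pow_nonneg hy 3]

lemma S9g_le' {y : ℝ} (h0 : 0 ≤ y) (h1 : y ≤ 1) : S9g y ≤ Real.sqrt (2 * (1 - y)) := by
  apply Real.sqrt_le_sqrt
  nlinarith [mul_nonneg (sq_nonneg (y-1)) (by linarith : (0:ℝ) ≤ y + 2)]

lemma S9g_ge {y : ℝ} (h0 : 0 ≤ y) (h1 : y ≤ 1) :
    Real.sqrt (2/3) * Real.sqrt (1 - y) ≤ S9g y := by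
  rw [← Real.sqrt_mul (by norm_num)]
  apply Real.sqrt_le_sqrt
  nlinarith [mul_nonneg (mul_nonneg h0 (sub_nonneg.2 h1)) (by linarith : (0:ℝ) ≤ y + 1)]

lemma S9h_nonneg (y : ℝ) : 0 ≤ S9h y := inv_nonneg.2 (S9g_nonneg y)

lemma S9h_pos {y : ℝ} (hy : y < 1) : 0 < S9h y := inv_pos.2 (S9g_pos hy)

lemma S9h_ge {y : ℝ} (hy : 0 ≤ y) (hy1 : y < 1) : Real.sqrt (3/2) ≤ S9h y := by
  rw [S9h, show (3/2 : ℝ) = (2/3)⁻¹ by norm_num, Real.sqrt_inv]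
  exact inv_anti₀ (S9g_pos hy1) (S9g_le hy)

lemma S9h_le {y : ℝ} (h0 : 0 ≤ y) (h1 : y ≤ 1) :
    S9h y ≤ Real.sqrt (3/2) * (1 - y) ^ (-(1/2) : ℝ) := by
  rcases eq_or_lt_of_le h1 with rfl | h1'
  · simp [S9h, S9g_one, Real.zero_rpow (by norm_num : (-(1/2):ℝ) ≠ 0)]
  · have h2 : (0:ℝ) < 1 - y := by linarith
    rw [Real.rpow_neg h2.le, ← Real.sqrt_eq_rpow]
    have hpos : 0 < Real.sqrt (2/3) * Real.sqrt (1 - y) :=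
      mul_pos (Real.sqrt_pos.2 (by norm_num)) (Real.sqrt_pos.2 h2)
    calc S9h y ≤ (Real.sqrt (2/3) * Real.sqrt (1 - y))⁻¹ := inv_anti₀ hpos (S9g_ge h0 h1)
    _ = Real.sqrt (3/2) * (Real.sqrt (1 - y))⁻¹ := by
        rw [mul_inv, ← Real.sqrt_inv]; norm_num


lemma S9J_integrable (c a b : ℝ) :
    IntervalIntegrable (fun y => c * (1-y) ^ (-(1/2):ℝ)) volume a b := by
  have h := (intervalIntegrable_rpow' (a := 1 - a) (b := 1 - b)
    (by norm_num : (-1:ℝ) < -(1/2))).comp_sub_left 1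
  simpa using h.const_mul c

lemma S9h_meas : AEStronglyMeasurable S9h (volume.restrict (Set.uIoc (0:ℝ) 1)) :=
  (S9g_cont.measurable.inv).aestronglyMeasurable

lemma S9h_integrable : IntervalIntegrable S9h volume 0 1 := by
  apply IntervalIntegrable.mono_fun (S9J_integrable (Real.sqrt (3/2)) 0 1) S9h_meas
  rw [Set.uIoc_of_le (by norm_num : (0:ℝ) ≤ 1)]
  refine (MeasureTheory.ae_restrict_iff' measurableSet_Ioc).2 ?_
  filter_upwards with x hx
  have h0 : (0:ℝ) ≤ x := hx.1.le
  have h1 : x ≤ 1 := hx.2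
  rw [Real.norm_eq_abs, Real.norm_eq_abs, abs_of_nonneg (S9h_nonneg x), abs_of_nonneg]
  · exact S9h_le h0 h1
  · exact mul_nonneg (Real.sqrt_nonneg _) (Real.rpow_nonneg (by linarith) _)

lemma S9hint {a b : ℝ} (ha : a ∈ Icc (0:ℝ) 1) (hb : b ∈ Icc (0:ℝ) 1) :
    IntervalIntegrable S9h volume a b :=
  S9h_integrable.mono_set (Set.uIcc_subset_uIcc (by simpa [Set.uIcc_of_le] using ha)
    (by simpa [Set.uIcc_of_le] using hb))

lemma S9F_zero : S9F 0 = 0 := intervalIntegral.integral_same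

lemma S9F_sub {a b : ℝ} (ha : a ∈ Icc (0:ℝ) 1) (hb : b ∈ Icc (0:ℝ) 1) :
    S9F b - S9F a = ∫ s in a..b, S9h s := by
  have := intervalIntegral.integral_add_adjacent_intervals
    (S9hint (Set.left_mem_Icc.2 (by norm_num)) ha) (S9hint ha hb)
  rw [S9F, S9F, ← this]; ring

lemma S9F_strictMono : StrictMonoOn S9F (Icc 0 1) := by
  intro a ha b hb hab
  have h : 0 < ∫ s in a..b, S9h s := by
    apply intervalIntegral_pos_of_pos_on (S9hint ha hb)
    · exact fun x hx => S9h_pos (lt_of_lt_of_le hx.2 hb.2)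
    · exact hab
  have := S9F_sub ha hb
  linarith

lemma S9F_mono : MonotoneOn S9F (Icc 0 1) := S9F_strictMono.monotoneOn

lemma S9F_cont : ContinuousOn S9F (Icc 0 1) := by
  have h := intervalIntegral.continuousOn_primitive_interval'
    (μ := volume) (b₁ := (0:ℝ)) (b₂ := (1:ℝ)) (a := (0:ℝ)) S9h_integrable Set.left_mem_uIcc
  rwa [Set.uIcc_of_le (by norm_num : (0:ℝ) ≤ 1)] at h

lemma S9F_hasDeriv {y : ℝ} (h0 : 0 ≤ y) (h1 : y < 1) : HasDerivAt S9F (S9h y) y := by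
  apply intervalIntegral.integral_hasDerivAt_right
    (S9hint (Set.left_mem_Icc.2 (by norm_num)) ⟨h0, h1.le⟩)
  · exact S9g_cont.measurable.inv.aestronglyMeasurable.stronglyMeasurableAtFilter
  · exact (S9g_cont.continuousAt).inv₀ (S9g_pos h1).ne'

lemma S9rint {a : ℝ} (ha : a ≤ 1) :
    ∫ y in a..(1:ℝ), (1-y) ^ (-(1/2):ℝ) = 2 * Real.sqrt (1-a) := by
  rw [intervalIntegral.integral_comp_sub_left (fun x => x ^ (-(1/2):ℝ)) 1]
  norm_num
  rw [integral_rpow (Or.inl (by norm_num : (-1:ℝ) < -(1/2)))]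
  have h1 : (-(1/2) : ℝ) + 1 = 1/2 := by norm_num
  rw [h1, Real.zero_rpow (by norm_num : (1/2:ℝ) ≠ 0), ← Real.sqrt_eq_rpow]
  ring

lemma S9T_le : S9T ≤ 2 * Real.sqrt (3/2) := by
  have h1 : S9T = ∫ y in (0:ℝ)..1, S9h y := rfl
  have h2 : (∫ y in (0:ℝ)..1, S9h y) ≤ ∫ y in (0:ℝ)..1, Real.sqrt (3/2) * (1-y) ^ (-(1/2):ℝ) := by
    apply intervalIntegral.integral_mono_on (by norm_num) S9h_integrable
      (S9J_integrable _ 0 1)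
    exact fun x hx => S9h_le hx.1 hx.2
  have h3 : (∫ y in (0:ℝ)..1, Real.sqrt (3/2) * (1-y) ^ (-(1/2):ℝ))
      = Real.sqrt (3/2) * (2 * Real.sqrt (1 - 0)) := by
    rw [intervalIntegral.integral_const_mul, S9rint (by norm_num)]
  rw [h1]
  calc (∫ y in (0:ℝ)..1, S9h y) ≤ _ := h2
    _ = Real.sqrt (3/2) * (2 * Real.sqrt (1-0)) := h3
    _ = 2 * Real.sqrt (3/2) := by norm_num; ring

lemma S9T_pos' : (3/2 : ℝ) ≤ S9T := by
  have hmem0 : (0:ℝ) ∈ Icc (0:ℝ) 1 := by norm_num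
  have hmemq : (1/4:ℝ) ∈ Icc (0:ℝ) 1 := by norm_num
  have hmem1 : (1:ℝ) ∈ Icc (0:ℝ) 1 := by norm_num
  have hsplit : S9T = (∫ y in (0:ℝ)..(1/4), S9h y) + ∫ y in (1/4:ℝ)..1, S9h y :=
    (intervalIntegral.integral_add_adjacent_intervals (S9hint hmem0 hmemq)
      (S9hint hmemq hmem1)).symm
  have hp1 : (1/4 : ℝ) * Real.sqrt (3/2) ≤ ∫ y in (0:ℝ)..(1/4), S9h y := by
    have := intervalIntegral.integral_mono_on (by norm_num : (0:ℝ) ≤ 1/4)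
      (_root_.intervalIntegrable_const (c := Real.sqrt (3/2))) (S9hint hmem0 hmemq)
      (fun x hx => S9h_ge hx.1 (by linarith [hx.2]))
    rw [intervalIntegral.integral_const, smul_eq_mul] at this
    linarith
  have hp2 : (Real.sqrt 2)⁻¹ * (2 * Real.sqrt (3/4)) ≤ ∫ y in (1/4:ℝ)..1, S9h y := by
    have hmono := intervalIntegral.integral_mono_on (by norm_num : (1/4:ℝ) ≤ 1)
      (S9J_integrable ((Real.sqrt 2)⁻¹) (1/4) 1) (S9hint hmemq hmem1) ?_
    · have hval : (∫ y in (1/4:ℝ)..1, (Real.sqrt 2)⁻¹ * (1-y) ^ (-(1/2):ℝ))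
          = (Real.sqrt 2)⁻¹ * (2 * Real.sqrt (3/4)) := by
        rw [intervalIntegral.integral_const_mul, S9rint (by norm_num)]
        norm_num
      rw [hval] at hmono; exact hmono
    · intro x hx
      have h0 : (0:ℝ) ≤ x := by linarith [hx.1]
      have h1 : x ≤ 1 := hx.2
      rcases eq_or_lt_of_le h1 with rfl | h1'
      · simp [S9h, S9g_one, Real.zero_rpow (by norm_num : (-(1/2):ℝ) ≠ 0)]
      · have h2 : (0:ℝ) < 1 - x := by linarith
        rw [Real.rpow_neg h2.le, ← Real.sqrt_eq_rpow]
        have hpos : 0 < Real.sqrt 2 * Real.sqrt (1 - x) :=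
          mul_pos (Real.sqrt_pos.2 (by norm_num)) (Real.sqrt_pos.2 h2)
        have hle : S9g x ≤ Real.sqrt 2 * Real.sqrt (1 - x) := by
          rw [← Real.sqrt_mul (by norm_num : (0:ℝ) ≤ 2)]
          exact S9g_le' h0 h1
        calc (Real.sqrt 2)⁻¹ * (Real.sqrt (1-x))⁻¹ = (Real.sqrt 2 * Real.sqrt (1-x))⁻¹ := by
              rw [mul_inv]
          _ ≤ (S9g x)⁻¹ := inv_anti₀ (S9g_pos h1') hle
  -- numeric estimates
  have e1 : (1.22 : ℝ) ≤ Real.sqrt (3/2) := by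
    have : (1.22 : ℝ) = Real.sqrt (1.22^2) := (Real.sqrt_sq (by norm_num)).symm
    rw [this]; apply Real.sqrt_le_sqrt; norm_num
  have e2 : Real.sqrt 2 ≤ 1.415 := by
    have : (1.415 : ℝ) = Real.sqrt (1.415^2) := (Real.sqrt_sq (by norm_num)).symm
    rw [this]; apply Real.sqrt_le_sqrt; norm_num
  have e3 : (0.866 : ℝ) ≤ Real.sqrt (3/4) := by
    have : (0.866 : ℝ) = Real.sqrt (0.866^2) := (Real.sqrt_sq (by norm_num)).symm
    rw [this]; apply Real.sqrt_le_sqrt; norm_num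
  have e2' : (0.706 : ℝ) ≤ (Real.sqrt 2)⁻¹ := by
    have h2p : (0:ℝ) < Real.sqrt 2 := Real.sqrt_pos.2 (by norm_num)
    have h := inv_anti₀ h2p e2
    have : ((1.415:ℝ))⁻¹ ≥ 0.706 := by norm_num
    linarith
  have hs3 : (0:ℝ) ≤ Real.sqrt (3/4) := Real.sqrt_nonneg _
  nlinarith [hp1, hp2, hsplit]

lemma S9T_pos : (0:ℝ) < S9T := lt_of_lt_of_le (by norm_num) S9T_pos'

lemma S9T_le4 : S9T ≤ 4 := by
  have h4 : Real.sqrt (3/2) ≤ Real.sqrt 4 := Real.sqrt_le_sqrt (by norm_num)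
  have h42 : Real.sqrt 4 = 2 := by
    rw [show (4:ℝ) = 2^2 by norm_num, Real.sqrt_sq (by norm_num : (0:ℝ) ≤ 2)]
  linarith [S9T_le]

noncomputable def S9P (t : ℝ) : ℝ := sSup {y | y ∈ Icc (0:ℝ) 1 ∧ S9F y ≤ t}

noncomputable def S9u0 (t : ℝ) : ℝ := S9P t + min t 0 + max (t - S9T) 0

lemma S9F_nonneg {y : ℝ} (hy : y ∈ Icc (0:ℝ) 1) : 0 ≤ S9F y := by
  have := S9F_mono (Set.left_mem_Icc.2 (by norm_num)) hy hy.1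
  rwa [S9F_zero] at this

lemma S9F_le_T {y : ℝ} (hy : y ∈ Icc (0:ℝ) 1) : S9F y ≤ S9T := by
  exact S9F_mono hy (Set.right_mem_Icc.2 (by norm_num)) hy.2

lemma S9P_bdd (t : ℝ) : BddAbove {y | y ∈ Icc (0:ℝ) 1 ∧ S9F y ≤ t} :=
  ⟨1, fun y hy => hy.1.2⟩

lemma S9P_F {y : ℝ} (hy : y ∈ Icc (0:ℝ) 1) : S9P (S9F y) = y := by
  apply IsGreatest.csSup_eq
  constructor
  · exact ⟨hy, le_refl _⟩
  · intro z hz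
    by_contra h
    push_neg at h
    exact absurd (S9F_strictMono hy hz.1 h) (not_lt.2 hz.2)

lemma S9P_neg {t : ℝ} (ht : t ≤ 0) : S9P t = 0 := by
  rcases eq_or_lt_of_le ht with rfl | ht'
  · have h0 : S9F 0 = 0 := S9F_zero
    have := S9P_F (Set.left_mem_Icc.2 (by norm_num : (0:ℝ) ≤ 1))
    rwa [h0] at this
  · have : {y | y ∈ Icc (0:ℝ) 1 ∧ S9F y ≤ t} = ∅ := by
      ext y; simp only [Set.mem_setOf_eq, Set.mem_empty_iff_false, iff_false]
      rintro ⟨hy, hFy⟩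
      exact absurd (lt_of_le_of_lt hFy ht') (not_lt.2 (S9F_nonneg hy))
    rw [S9P, this, Real.sSup_empty]

lemma S9P_big {t : ℝ} (ht : S9T ≤ t) : S9P t = 1 := by
  have : {y | y ∈ Icc (0:ℝ) 1 ∧ S9F y ≤ t} = Icc (0:ℝ) 1 := by
    ext y
    simp only [Set.mem_setOf_eq, and_iff_left_iff_imp]
    exact fun hy => le_trans (S9F_le_T hy) ht
  rw [S9P, this, csSup_Icc (by norm_num)]

lemma S9P_nonneg {t : ℝ} (ht : 0 ≤ t) : 0 ≤ S9P t :=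
  le_csSup (S9P_bdd t) ⟨Set.left_mem_Icc.2 (by norm_num), by rw [S9F_zero]; exact ht⟩

lemma S9P_mono : Monotone S9P := by
  intro a b hab
  rcases lt_or_ge b 0 with hb | hb
  · rw [S9P_neg hb.le, S9P_neg (by linarith)]
  · rcases lt_or_ge a 0 with ha | ha
    · rw [S9P_neg ha.le]; exact S9P_nonneg hb
    · apply csSup_le_csSup (S9P_bdd b)
      · exact ⟨0, Set.left_mem_Icc.2 (by norm_num), by rw [S9F_zero]; exact ha⟩
      · exact fun y hy => ⟨hy.1, hy.2.trans hab⟩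

lemma S9u0_neg {t : ℝ} (ht : t ≤ 0) : S9u0 t = t := by
  rw [S9u0, S9P_neg ht, min_eq_left ht, max_eq_right (by linarith [S9T_pos])]
  ring

lemma S9u0_F {y : ℝ} (hy : y ∈ Icc (0:ℝ) 1) : S9u0 (S9F y) = y := by
  rw [S9u0, S9P_F hy, min_eq_right (S9F_nonneg hy),
    max_eq_right (by linarith [S9F_le_T hy])]
  ring

lemma S9u0_big {t : ℝ} (ht : S9T ≤ t) : S9u0 t = 1 + (t - S9T) := by
  rw [S9u0, S9P_big ht, min_eq_right (by linarith [S9T_pos]), max_eq_left (by linarith)]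
  ring

lemma S9u0_mono : Monotone S9u0 := by
  apply Monotone.add (Monotone.add S9P_mono _) _
  · exact fun a b hab => min_le_min hab (le_refl 0)
  · exact fun a b hab => max_le_max (by linarith) (le_refl 0)

lemma S9u0_surj : Function.Surjective S9u0 := by
  intro z
  rcases le_or_gt z 0 with hz | hz
  · exact ⟨z, S9u0_neg hz⟩
  · rcases le_or_gt z 1 with hz1 | hz1
    · exact ⟨S9F z, S9u0_F ⟨hz.le, hz1⟩⟩
    · refine ⟨S9T + (z - 1), ?_⟩
      rw [S9u0_big (by linarith)]; ring

lemma S9u0_cont : Continuous S9u0 := S9u0_mono.continuous_of_surjective S9u0_surj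

lemma S9u0_zero : S9u0 0 = 0 := S9u0_neg (le_refl 0)

lemma S9u0_T : S9u0 S9T = 1 := by rw [S9u0_big (le_refl _)]; ring

lemma S9u0_mem {t : ℝ} (ht : t ∈ Icc 0 S9T) : S9u0 t ∈ Icc (0:ℝ) 1 := by
  constructor
  · have := S9u0_mono ht.1; rwa [S9u0_zero] at this
  · have := S9u0_mono ht.2; rwa [S9u0_T] at this

lemma S9F_u0 {t : ℝ} (ht : t ∈ Icc 0 S9T) : S9F (S9u0 t) = t := by
  have h01 : (0:ℝ) ≤ 1 := by norm_num
  have hIVT := intermediate_value_Icc h01 S9F_cont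
  have : t ∈ Icc (S9F 0) (S9F 1) := by rwa [S9F_zero]
  obtain ⟨y, hy, hFy⟩ := hIVT this
  rw [← hFy, S9u0_F hy]

lemma S9u0_hasDeriv {t : ℝ} (ht : t ∈ Ioo 0 S9T) : HasDerivAt S9u0 (S9g (S9u0 t)) t := by
  set y := S9u0 t with hy
  have hmem : y ∈ Icc (0:ℝ) 1 := S9u0_mem (Ioo_subset_Icc_self ht)
  have hy0 : y ≠ 0 := by
    intro h
    have := S9F_u0 (Ioo_subset_Icc_self ht)
    rw [← hy, h, S9F_zero] at this
    exact absurd this.symm (ne_of_gt ht.1)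
  have hy1 : y ≠ 1 := by
    intro h
    have := S9F_u0 (Ioo_subset_Icc_self ht)
    rw [← hy, h] at this
    exact absurd this (ne_of_gt ht.2)
  have hylt : y < 1 := lt_of_le_of_ne hmem.2 hy1
  have hF : HasDerivAt S9F (S9h y) y := S9F_hasDeriv hmem.1 hylt
  have hinv : (S9h y)⁻¹ = S9g y := by rw [S9h, inv_inv]
  have h0 : S9h y ≠ 0 := (S9h_pos hylt).ne'
  have hfg : ∀ᶠ x in nhds t, S9F (S9u0 x) = x := by
    filter_upwards [Ioo_mem_nhds ht.1 ht.2] with x hx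
    exact S9F_u0 (Ioo_subset_Icc_self hx)
  have := HasDerivAt.of_local_left_inverse S9u0_cont.continuousAt hF h0 hfg
  rwa [hinv] at this

noncomputable def S9v (t : ℝ) : ℝ := S9u0 (S9T - |t - S9T|)

noncomputable def S9w (t : ℝ) : ℝ := (if t ≤ S9T then 1 else -1) * S9g (S9v t)

lemma S9v_cont : Continuous S9v := by
  apply S9u0_cont.comp; continuity

lemma S9v_eq_left {t : ℝ} (ht : t ≤ S9T) : S9v t = S9u0 t := by
  rw [S9v, abs_of_nonpos (by linarith)]; ring_nf

lemma S9v_eq_right {t : ℝ} (ht : S9T ≤ t) : S9v t = S9u0 (2 * S9T - t) := by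
  rw [S9v, abs_of_nonneg (by linarith)]; ring_nf

lemma S9v_mem {t : ℝ} (ht : t ∈ Icc 0 (2 * S9T)) : S9v t ∈ Icc (0:ℝ) 1 := by
  apply S9u0_mem
  constructor
  · rcases abs_cases (t - S9T) with ⟨h, _⟩ | ⟨h, _⟩ <;> rw [h] <;>
      [linarith [ht.2]; linarith [ht.1]]
  · linarith [abs_nonneg (t - S9T)]

lemma S9v_zero : S9v 0 = 0 := by
  rw [S9v_eq_left S9T_pos.le, S9u0_zero]

lemma S9v_2T : S9v (2 * S9T) = 0 := by
  rw [S9v_eq_right (by linarith [S9T_pos]), show 2 * S9T - 2 * S9T = 0 by ring, S9u0_zero]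

lemma S9v_T : S9v S9T = 1 := by
  rw [S9v_eq_left (le_refl _), S9u0_T]

lemma S9v_lt_one {t : ℝ} (ht : t ∈ Icc 0 (2 * S9T)) (hne : t ≠ S9T) : S9v t < 1 := by
  rcases eq_or_lt_of_le (S9v_mem ht).2 with h1 | h1
  · exfalso
    have hs : S9T - |t - S9T| ∈ Icc 0 S9T := by
      constructor
      · rcases abs_cases (t - S9T) with ⟨h, _⟩ | ⟨h, _⟩ <;> rw [h] <;>
          [linarith [ht.2]; linarith [ht.1]]
      · linarith [abs_nonneg (t - S9T)]
    have := S9F_u0 hs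
    rw [show S9u0 (S9T - |t - S9T|) = S9v t from rfl, h1] at this
    have hT : S9F 1 = S9T := rfl
    rw [hT] at this
    have : |t - S9T| = 0 := by linarith
    exact hne (by have := abs_eq_zero.1 this; linarith)
  · exact h1

lemma S9v_deriv_left {t : ℝ} (ht : t ∈ Ioo 0 S9T) : HasDerivAt S9v (S9g (S9v t)) t := by
  have h := S9u0_hasDeriv ht
  have heq : S9v =ᶠ[nhds t] S9u0 := by
    filter_upwards [Iio_mem_nhds ht.2] with x hx
    exact S9v_eq_left (le_of_lt hx)
  have := h.congr_of_eventuallyEq heq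
  rwa [S9v_eq_left ht.2.le]

lemma S9v_deriv_right {t : ℝ} (ht : t ∈ Ioo S9T (2 * S9T)) :
    HasDerivAt S9v (-S9g (S9v t)) t := by
  have hs : 2 * S9T - t ∈ Ioo 0 S9T := ⟨by linarith [ht.2], by linarith [ht.1]⟩
  have h1 : HasDerivAt (fun x => 2 * S9T - x) (-1) t := by
    simpa using (hasDerivAt_id t).const_sub (2 * S9T)
  have h := (S9u0_hasDeriv hs).comp t h1
  have heq : S9v =ᶠ[nhds t] fun x => S9u0 (2 * S9T - x) := by
    filter_upwards [Ioi_mem_nhds ht.1] with x hx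
    exact S9v_eq_right (le_of_lt hx)
  have h2 := h.congr_of_eventuallyEq heq
  have h3 : S9v t = S9u0 (2 * S9T - t) := S9v_eq_right ht.1.le
  rw [← h3] at h2
  refine h2.congr_deriv ?_
  ring

lemma S9w_left {t : ℝ} (ht : t ≤ S9T) : S9w t = S9g (S9v t) := by
  rw [S9w, if_pos ht, one_mul]

lemma S9w_right {t : ℝ} (ht : S9T < t) : S9w t = -S9g (S9v t) := by
  rw [S9w, if_neg (not_le.2 ht)]; ring

lemma S9w_T : S9w S9T = 0 := by
  rw [S9w_left (le_refl _), S9v_T, S9g_one]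

lemma S9v_hasDeriv_ne {t : ℝ} (ht : t ∈ Ioo 0 (2 * S9T)) (hne : t ≠ S9T) :
    HasDerivAt S9v (S9w t) t := by
  rcases lt_or_gt_of_ne hne with h | h
  · rw [S9w_left h.le]; exact S9v_deriv_left ⟨ht.1, h⟩
  · rw [S9w_right h]; exact S9v_deriv_right ⟨h, ht.2⟩

lemma S9w_contAt : ∀ t, S9v t = 1 → Filter.Tendsto S9w (nhds t) (nhds 0) := by
  intro t hvt
  refine squeeze_zero_norm (a := fun x => S9g (S9v x)) ?_ ?_
  · intro x
    rw [Real.norm_eq_abs, S9w, abs_mul]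
    rcases le_or_gt x S9T with h | h
    · rw [if_pos h, abs_one, one_mul, abs_of_nonneg (S9g_nonneg _)]
    · rw [if_neg (not_le.2 h)]
      simp [abs_of_nonneg (S9g_nonneg _)]
  · have : Continuous fun x => S9g (S9v x) := S9g_cont.comp S9v_cont
    have h0 : S9g (S9v t) = 0 := by rw [hvt, S9g_one]
    simpa [h0] using this.tendsto t

lemma S9g_hasDeriv {y : ℝ} (hy : y < 1) : HasDerivAt S9g (-y^2 / S9g y) y := by
  have h1 : HasDerivAt (fun x : ℝ => 1 - x^3) (-(3*y^2)) y := by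
    simpa using (hasDerivAt_pow 3 y).const_sub 1
  have h2 : HasDerivAt (fun x : ℝ => 2/3 * (1 - x^3)) (2/3 * -(3*y^2)) y := h1.const_mul (2/3)
  have hne : 2/3 * (1 - y^3) ≠ 0 := by
    have : (0:ℝ) < 2/3 * (1 - y^3) := by
      nlinarith [sq_nonneg (y + 1/2), sq_nonneg y, sq_nonneg (y-1),
        mul_pos (mul_pos (sub_pos.2 hy) (sub_pos.2 hy))
          (by nlinarith [sq_nonneg (2*y+1)] : (0:ℝ) < y^2 + y + 1)]
    exact this.ne'
  have h3 := h2.sqrt hne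
  have h4 : HasDerivAt S9g (2/3 * -(3*y^2) / (2 * S9g y)) y := h3
  convert h4 using 1
  ring

lemma S9w_hasDeriv_ne {t : ℝ} (ht : t ∈ Ioo 0 (2 * S9T)) (hne : t ≠ S9T) :
    HasDerivAt S9w (-(S9v t)^2) t := by
  have hv1 : S9v t < 1 := S9v_lt_one (Ioo_subset_Icc_self ht) hne
  have hgpos : 0 < S9g (S9v t) := S9g_pos hv1
  rcases lt_or_gt_of_ne hne with h | h
  · have hv := S9v_deriv_left ⟨ht.1, h⟩
    have hg := S9g_hasDeriv hv1
    have hcomp := hg.comp t hv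
    have heq : S9w =ᶠ[nhds t] fun x => S9g (S9v x) := by
      filter_upwards [Iio_mem_nhds h] with x hx
      exact S9w_left (le_of_lt hx)
    have h2 := hcomp.congr_of_eventuallyEq heq
    refine h2.congr_deriv ?_
    field_simp [hgpos.ne']
  · have hv := S9v_deriv_right ⟨h, ht.2⟩
    have hg := S9g_hasDeriv hv1
    have hcomp := (hg.comp t hv).neg
    have heq : S9w =ᶠ[nhds t] fun x => -S9g (S9v x) := by
      filter_upwards [Ioi_mem_nhds h] with x hx
      exact S9w_right hx
    have h2 := hcomp.congr_of_eventuallyEq heq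
    refine h2.congr_deriv ?_
    field_simp [hgpos.ne']

lemma S9v_hasDeriv_T : HasDerivAt S9v (S9w S9T) S9T := by
  have hwT : S9w S9T = 0 := S9w_T
  have hcont : Filter.Tendsto S9w (nhds S9T) (nhds 0) := S9w_contAt S9T S9v_T
  have hTpos := S9T_pos
  have hA : HasDerivWithinAt S9v 0 (Ici S9T) S9T := by
    apply hasDerivWithinAt_Ici_of_tendsto_deriv (s := Ioo S9T (2*S9T))
    · intro x hx
      exact (S9v_deriv_right hx).differentiableAt.differentiableWithinAt
    · exact S9v_cont.continuousWithinAt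
    · exact Ioo_mem_nhdsGT_of_mem ⟨le_refl _, by linarith⟩
    · have : Filter.Tendsto S9w (nhdsWithin S9T (Ioi S9T)) (nhds 0) :=
        hcont.mono_left nhdsWithin_le_nhds
      apply this.congr'
      filter_upwards [Ioo_mem_nhdsGT_of_mem (α := ℝ)
        (show S9T ∈ Ico S9T (2*S9T) from ⟨le_refl _, by linarith⟩)] with x hx
      exact ((S9v_hasDeriv_ne ⟨by linarith [hx.1], hx.2⟩ (ne_of_gt hx.1)).deriv).symm
  have hB : HasDerivWithinAt S9v 0 (Iic S9T) S9T := by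
    apply hasDerivWithinAt_Iic_of_tendsto_deriv (s := Ioo 0 S9T)
    · intro x hx
      exact (S9v_deriv_left hx).differentiableAt.differentiableWithinAt
    · exact S9v_cont.continuousWithinAt
    · exact Ioo_mem_nhdsLT_of_mem ⟨by linarith, le_refl _⟩
    · have : Filter.Tendsto S9w (nhdsWithin S9T (Iio S9T)) (nhds 0) :=
        hcont.mono_left nhdsWithin_le_nhds
      apply this.congr'
      filter_upwards [Ioo_mem_nhdsLT_of_mem (α := ℝ)
        (show S9T ∈ Ioc 0 S9T from ⟨hTpos, le_refl _⟩)] with x hx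
      exact ((S9v_hasDeriv_ne ⟨hx.1, by linarith [hx.2]⟩ (ne_of_lt hx.2)).deriv).symm
  rw [hwT]
  simpa using hB.union hA

lemma S9w_hasDeriv_T : HasDerivAt S9w (-(S9v S9T)^2) S9T := by
  have hTpos := S9T_pos
  have hcontw : ContinuousAt S9w S9T := by
    rw [ContinuousAt, S9w_T]
    exact S9w_contAt S9T S9v_T
  have hd2 : Continuous fun x => -(S9v x)^2 := by
    have := S9v_cont
    continuity
  have hA : HasDerivWithinAt S9w (-(S9v S9T)^2) (Ici S9T) S9T := by
    apply hasDerivWithinAt_Ici_of_tendsto_deriv (s := Ioo S9T (2*S9T))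
    · intro x hx
      exact (S9w_hasDeriv_ne ⟨by linarith [hx.1], hx.2⟩
        (ne_of_gt hx.1)).differentiableAt.differentiableWithinAt
    · exact hcontw.continuousWithinAt
    · exact Ioo_mem_nhdsGT_of_mem ⟨le_refl _, by linarith⟩
    · have : Filter.Tendsto (fun x => -(S9v x)^2) (nhdsWithin S9T (Ioi S9T))
          (nhds (-(S9v S9T)^2)) := (hd2.tendsto _).mono_left nhdsWithin_le_nhds
      apply this.congr'
      filter_upwards [Ioo_mem_nhdsGT_of_mem (α := ℝ)
        (show S9T ∈ Ico S9T (2*S9T) from ⟨le_refl _, by linarith⟩)] with x hx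
      exact ((S9w_hasDeriv_ne ⟨by linarith [hx.1], hx.2⟩ (ne_of_gt hx.1)).deriv).symm
  have hB : HasDerivWithinAt S9w (-(S9v S9T)^2) (Iic S9T) S9T := by
    apply hasDerivWithinAt_Iic_of_tendsto_deriv (s := Ioo 0 S9T)
    · intro x hx
      exact (S9w_hasDeriv_ne ⟨hx.1, by linarith [hx.2]⟩
        (ne_of_lt hx.2)).differentiableAt.differentiableWithinAt
    · exact hcontw.continuousWithinAt
    · exact Ioo_mem_nhdsLT_of_mem ⟨hTpos, le_refl _⟩
    · have : Filter.Tendsto (fun x => -(S9v x)^2) (nhdsWithin S9T (Iio S9T))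
          (nhds (-(S9v S9T)^2)) := (hd2.tendsto _).mono_left nhdsWithin_le_nhds
      apply this.congr'
      filter_upwards [Ioo_mem_nhdsLT_of_mem (α := ℝ)
        (show S9T ∈ Ioc 0 S9T from ⟨hTpos, le_refl _⟩)] with x hx
      exact ((S9w_hasDeriv_ne ⟨hx.1, by linarith [hx.2]⟩ (ne_of_lt hx.2)).deriv).symm
  simpa using hB.union hA

lemma S9v_hasDerivWithin_0 : HasDerivWithinAt S9v (S9w 0) (Ici 0) 0 := by
  have hTpos := S9T_pos
  apply hasDerivWithinAt_Ici_of_tendsto_deriv (s := Ioo 0 S9T)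
  · intro x hx
    exact (S9v_deriv_left hx).differentiableAt.differentiableWithinAt
  · exact S9v_cont.continuousWithinAt
  · exact Ioo_mem_nhdsGT_of_mem ⟨le_refl _, hTpos⟩
  · have hco : Continuous fun x => S9g (S9v x) := S9g_cont.comp S9v_cont
    have h0 : S9w 0 = S9g (S9v 0) := S9w_left hTpos.le
    rw [h0]
    have : Filter.Tendsto (fun x => S9g (S9v x)) (nhdsWithin 0 (Ioi 0))
        (nhds (S9g (S9v 0))) := (hco.tendsto _).mono_left nhdsWithin_le_nhds
    apply this.congr'
    filter_upwards [Ioo_mem_nhdsGT_of_mem (α := ℝ)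
      (show (0:ℝ) ∈ Ico 0 S9T from ⟨le_refl _, hTpos⟩)] with x hx
    have := (S9v_deriv_left hx).deriv
    rw [this]

lemma S9v_hasDerivWithin_2T :
    HasDerivWithinAt S9v (S9w (2 * S9T)) (Iic (2 * S9T)) (2 * S9T) := by
  have hTpos := S9T_pos
  apply hasDerivWithinAt_Iic_of_tendsto_deriv (s := Ioo S9T (2 * S9T))
  · intro x hx
    exact (S9v_deriv_right hx).differentiableAt.differentiableWithinAt
  · exact S9v_cont.continuousWithinAt
  · exact Ioo_mem_nhdsLT_of_mem ⟨by linarith, le_refl _⟩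
  · have hco : Continuous fun x => -S9g (S9v x) := (S9g_cont.comp S9v_cont).neg
    have h0 : S9w (2 * S9T) = -S9g (S9v (2 * S9T)) := S9w_right (by linarith)
    rw [h0]
    have : Filter.Tendsto (fun x => -S9g (S9v x)) (nhdsWithin (2 * S9T) (Iio (2 * S9T)))
        (nhds (-S9g (S9v (2 * S9T)))) := (hco.tendsto _).mono_left nhdsWithin_le_nhds
    apply this.congr'
    filter_upwards [Ioo_mem_nhdsLT_of_mem (α := ℝ)
      (show (2*S9T:ℝ) ∈ Ioc S9T (2*S9T) from ⟨by linarith, le_refl _⟩)] with x hx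
    have := (S9v_deriv_right hx).deriv
    rw [this]

lemma S9w_hasDerivWithin_0 : HasDerivWithinAt S9w (-(S9v 0)^2) (Ici 0) 0 := by
  have hTpos := S9T_pos
  have hg : HasDerivAt S9g (-(S9v 0)^2 / S9g (S9v 0)) (S9v 0) :=
    S9g_hasDeriv (by rw [S9v_zero]; norm_num)
  have hv := S9v_hasDerivWithin_0
  have hcomp := hg.comp_hasDerivWithinAt 0 hv
  have heq : (fun x => S9g (S9v x)) =ᶠ[nhdsWithin 0 (Ici 0)] S9w := by
    apply Filter.mem_of_superset (mem_nhdsWithin_of_mem_nhds (Iio_mem_nhds hTpos))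
    intro x hx
    exact (S9w_left (le_of_lt hx)).symm
  have h2 := hcomp.congr_of_eventuallyEq heq.symm (S9w_left hTpos.le)
  refine h2.congr_deriv ?_
  rw [S9v_zero]
  norm_num

lemma S9w_hasDerivWithin_2T :
    HasDerivWithinAt S9w (-(S9v (2*S9T))^2) (Iic (2*S9T)) (2*S9T) := by
  have hTpos := S9T_pos
  have hg : HasDerivAt S9g (-(S9v (2*S9T))^2 / S9g (S9v (2*S9T))) (S9v (2*S9T)) :=
    S9g_hasDeriv (by rw [S9v_2T]; norm_num)
  have hv := S9v_hasDerivWithin_2T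
  have hcomp := (hg.comp_hasDerivWithinAt (2*S9T) hv).neg
  have heq : (fun x => -S9g (S9v x)) =ᶠ[nhdsWithin (2*S9T) (Iic (2*S9T))] S9w := by
    apply Filter.mem_of_superset (mem_nhdsWithin_of_mem_nhds (Ioi_mem_nhds (by linarith)))
    intro x hx
    exact (S9w_right hx).symm
  have h2 := hcomp.congr_of_eventuallyEq heq.symm (S9w_right (by linarith))
  refine h2.congr_deriv ?_
  rw [S9v_2T]
  norm_num

lemma S9hA : ∀ t ∈ Icc 0 (2*S9T), HasDerivWithinAt S9v (S9w t) (Icc 0 (2*S9T)) t := by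
  intro t ht
  rcases eq_or_lt_of_le ht.1 with h0 | h0
  · rw [← h0]
    exact S9v_hasDerivWithin_0.mono Icc_subset_Ici_self
  rcases eq_or_lt_of_le ht.2 with h2 | h2
  · rw [h2]
    exact S9v_hasDerivWithin_2T.mono Icc_subset_Iic_self
  by_cases hT : t = S9T
  · rw [hT]
    exact S9v_hasDeriv_T.hasDerivWithinAt
  · exact (S9v_hasDeriv_ne ⟨h0, h2⟩ hT).hasDerivWithinAt

lemma S9hB : ∀ t ∈ Icc 0 (2*S9T), HasDerivWithinAt S9w (-(S9v t)^2) (Icc 0 (2*S9T)) t := by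
  intro t ht
  rcases eq_or_lt_of_le ht.1 with h0 | h0
  · rw [← h0]
    exact S9w_hasDerivWithin_0.mono Icc_subset_Ici_self
  rcases eq_or_lt_of_le ht.2 with h2 | h2
  · rw [h2]
    exact S9w_hasDerivWithin_2T.mono Icc_subset_Iic_self
  by_cases hT : t = S9T
  · rw [hT]
    exact S9w_hasDeriv_T.hasDerivWithinAt
  · exact (S9w_hasDeriv_ne ⟨h0, h2⟩ hT).hasDerivWithinAt

lemma S9contDiff_two {s : Set ℝ} (hs : UniqueDiffOn ℝ s) (f f' f'' : ℝ → ℝ)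
    (h1 : ∀ t ∈ s, HasDerivWithinAt f (f' t) s t)
    (h2 : ∀ t ∈ s, HasDerivWithinAt f' (f'' t) s t)
    (h3 : ContinuousOn f'' s) : ContDiffOn ℝ 2 f s := by
  have hd1 : DifferentiableOn ℝ f s := fun t ht => (h1 t ht).differentiableWithinAt
  have hd2 : DifferentiableOn ℝ f' s := fun t ht => (h2 t ht).differentiableWithinAt
  have he1 : ∀ t ∈ s, derivWithin f s t = f' t := fun t ht => (h1 t ht).derivWithin (hs t ht)
  have he2 : ∀ t ∈ s, derivWithin f' s t = f'' t := fun t ht => (h2 t ht).derivWithin (hs t ht)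
  rw [show (2 : WithTop ℕ∞) = 1 + 1 by norm_num, contDiffOn_succ_iff_derivWithin hs]
  refine ⟨hd1, by simp, ?_⟩
  apply ContDiffOn.congr ?_ he1
  rw [show (1 : WithTop ℕ∞) = 0 + 1 by norm_num, contDiffOn_succ_iff_derivWithin hs]
  refine ⟨hd2, by simp, ?_⟩
  apply ContDiffOn.congr ?_ he2
  rw [contDiffOn_zero]
  exact h3

lemma S9v_hasDerivAt_interior {s : ℝ} (hs : s ∈ Ioo 0 (2*S9T)) :
    HasDerivAt S9v (S9w s) s := by
  by_cases hT : s = S9T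
  · rw [hT]; exact S9v_hasDeriv_T
  · exact S9v_hasDeriv_ne hs hT

lemma S9w_hasDerivAt_interior {s : ℝ} (hs : s ∈ Ioo 0 (2*S9T)) :
    HasDerivAt S9w (-(S9v s)^2) s := by
  by_cases hT : s = S9T
  · rw [hT]; exact S9w_hasDeriv_T
  · exact S9w_hasDeriv_ne hs hT

lemma S9v_contDiff : ContDiffOn ℝ 2 S9v (Icc 0 (2*S9T)) := by
  apply S9contDiff_two (uniqueDiffOn_Icc (by linarith [S9T_pos])) S9v S9w
    (fun t => -(S9v t)^2) S9hA S9hB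
  exact ((S9v_cont.pow 2).neg).continuousOn


end

/-- For every `λ ≥ 256` the BVP `u'' + λ u² = 0`, `u(0) = u(1) = 0` has a
nontrivial nonnegative solution `u_λ` with `8/λ ≤ ‖u_λ‖ ≤ 1`. -/
theorem stmt_9 :
    ∀ lam : ℝ, 256 ≤ lam →
      ∃ u : ℝ → ℝ, ContDiffOn ℝ 2 u (Icc 0 1) ∧
        (∀ t ∈ Icc (0:ℝ) 1, 0 ≤ u t) ∧
        (∀ t ∈ Ioo (0:ℝ) 1, deriv (deriv u) t + lam * (u t) ^ 2 = 0) ∧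
        u 0 = 0 ∧ u 1 = 0 ∧
        (∃ t ∈ Icc (0:ℝ) 1, u t ≠ 0) ∧
        8 / lam ≤ supNorm u ∧ supNorm u ≤ 1 := by
  intro lam hlam
  have hlam0 : (0:ℝ) < lam := by linarith
  have hT0 := S9T_pos
  have hT4 := S9T_le4
  have hT32 := S9T_pos'
  set k : ℝ := 2 * S9T with hk
  have hk0 : 0 < k := by rw [hk]; linarith
  set c : ℝ := k^2 / lam with hc
  have hc0 : 0 < c := by positivity
  have hc1 : c ≤ 1 := by
    rw [hc, div_le_one hlam0]
    nlinarith
  have hk3 : 3 ≤ k := by rw [hk]; linarith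
  have hc8 : 8 / lam ≤ c := by
    rw [hc, div_le_div_iff₀ hlam0 hlam0]
    have h8 : (8:ℝ) ≤ k^2 := by nlinarith
    nlinarith [mul_le_mul_of_nonneg_right h8 hlam0.le]
  refine ⟨fun t => c * S9v (k * t), ?_, ?_, ?_, ?_, ?_, ?_, ?_, ?_⟩
  · -- smoothness
    have hmaps : MapsTo (fun t : ℝ => k * t) (Icc 0 1) (Icc 0 (2*S9T)) := by
      intro t ht
      refine ⟨mul_nonneg hk0.le ht.1, ?_⟩
      show k * t ≤ 2 * S9T
      nlinarith [mul_le_mul_of_nonneg_left ht.2 hk0.le]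
    have hlin : ContDiffOn ℝ 2 (fun t : ℝ => k * t) (Icc 0 1) :=
      (contDiff_const.mul contDiff_id).contDiffOn
    exact contDiffOn_const.mul (S9v_contDiff.comp hlin hmaps)
  · -- nonneg
    intro t ht
    have hmem : k * t ∈ Icc 0 (2*S9T) :=
      ⟨mul_nonneg hk0.le ht.1, by nlinarith [mul_le_mul_of_nonneg_left ht.2 hk0.le]⟩
    exact mul_nonneg hc0.le (S9v_mem hmem).1
  · -- ODE
    intro t ht
    have hs : k * t ∈ Ioo 0 (2*S9T) := by
      constructor
      · exact mul_pos hk0 ht.1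
      · nlinarith [mul_lt_mul_of_pos_left ht.2 hk0]
    have hu : ∀ x ∈ Ioo (0:ℝ) 1,
        HasDerivAt (fun t => c * S9v (k * t)) ((c * k) * S9w (k * x)) x := by
      intro x hx
      have hsx : k * x ∈ Ioo 0 (2*S9T) :=
        ⟨mul_pos hk0 hx.1, by nlinarith [mul_lt_mul_of_pos_left hx.2 hk0]⟩
      have hlin : HasDerivAt (fun t : ℝ => k * t) k x := by
        simpa using (hasDerivAt_id x).const_mul k
      have := ((S9v_hasDerivAt_interior hsx).comp x hlin).const_mul c
      refine this.congr_deriv ?_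
      ring
    have hDu : deriv (fun t => c * S9v (k * t)) =ᶠ[nhds t]
        fun x => (c * k) * S9w (k * x) := by
      filter_upwards [Ioo_mem_nhds ht.1 ht.2] with x hx
      exact (hu x hx).deriv
    have hw : HasDerivAt (fun x => (c * k) * S9w (k * x)) ((c * k) * (-(S9v (k*t))^2 * k)) t := by
      have hlin : HasDerivAt (fun t : ℝ => k * t) k t := by
        simpa using (hasDerivAt_id t).const_mul k
      exact ((S9w_hasDerivAt_interior hs).comp t hlin).const_mul (c * k)
    have h2 : deriv (deriv (fun t => c * S9v (k * t))) t
        = (c * k) * (-(S9v (k*t))^2 * k) := by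
      rw [hDu.deriv_eq]
      exact hw.deriv
    rw [h2]
    have hck : lam * c^2 = c * k^2 := by
      rw [hc]; field_simp
    have hgoal : c * k * (-S9v (k * t) ^ 2 * k) + lam * (c * S9v (k * t)) ^ 2 = 0 := by
      linear_combination (S9v (k * t))^2 * hck
    exact hgoal
  · -- u 0 = 0
    norm_num [S9v_zero]
  · -- u 1 = 0
    show c * S9v (k * 1) = 0
    rw [mul_one, hk, S9v_2T, mul_zero]
  · -- nontrivial
    refine ⟨1/2, by norm_num, ?_⟩
    have hhalf : k * (1/2) = S9T := by rw [hk]; ring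
    show c * S9v (k * (1/2)) ≠ 0
    rw [hhalf, S9v_T, mul_one]
    exact hc0.ne'
  · -- lower bound on supNorm
    have hmem : c ∈ (fun t => |c * S9v (k * t)|) '' Icc (0:ℝ) 1 := by
      refine ⟨1/2, by norm_num, ?_⟩
      have hhalf : k * (1/2) = S9T := by rw [hk]; ring
      show |c * S9v (k * (1/2))| = c
      rw [hhalf, S9v_T, mul_one, abs_of_pos hc0]
    have hbdd : BddAbove ((fun t => |c * S9v (k * t)|) '' Icc (0:ℝ) 1) := by
      refine ⟨c, ?_⟩
      rintro x ⟨t, ht, rfl⟩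
      have hmemt : k * t ∈ Icc 0 (2*S9T) :=
        ⟨mul_nonneg hk0.le ht.1, by nlinarith [mul_le_mul_of_nonneg_left ht.2 hk0.le]⟩
      show |c * S9v (k * t)| ≤ c
      rw [abs_of_nonneg (mul_nonneg hc0.le (S9v_mem hmemt).1)]
      nlinarith [mul_le_mul_of_nonneg_left (S9v_mem hmemt).2 hc0.le]
    exact le_trans hc8 (le_csSup hbdd hmem)
  · -- upper bound on supNorm
    apply Real.sSup_le
    · rintro x ⟨t, ht, rfl⟩
      have hmemt : k * t ∈ Icc 0 (2*S9T) :=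
        ⟨mul_nonneg hk0.le ht.1, by nlinarith [mul_le_mul_of_nonneg_left ht.2 hk0.le]⟩
      show |c * S9v (k * t)| ≤ 1
      rw [abs_of_nonneg (mul_nonneg hc0.le (S9v_mem hmemt).1)]
      nlinarith [mul_le_mul_of_nonneg_left (S9v_mem hmemt).2 hc0.le]
    · norm_num
end

section
/- Let f : [0,∞) → [0,∞) and k : [0,1]×[0,1] → [0,∞) be continuous, let 0 ≤ a < b ≤ 1, c ∈ (0,1], and Φ : [0,1] → [0,∞) be in L¹[0,1] with ∫_a^b Φ(s) ds > 0, with k(t,s) ≤ Φ(s) for all t,s ∈ [0,1] and cΦ(s) ≤ k(t,s) for all t ∈ [a,b], s ∈ [0,1]. Let K = {u ∈ C[0,1] : u ≥ 0, min_{t∈[a,b]} u(t) ≥ c‖u‖}, Tu(t) = ∫₀¹ k(t,s) f(u(s)) ds, and V_ρ = {u ∈ K : min_{t∈[a,b]} u(t) < ρ}. Suppose there exists ρ > 0 such that f_{ρ,ρ/c} > M(a,b), where f_{ρ,ρ/c} = inf{ f(u)/ρ : ρ ≤ u ≤ ρ/c } and 1/M(a,b) = inf_{t∈[a,b]} ∫_a^b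 k(t,s) ds. Then for every u ∈ K with min_{t∈[a,b]} u(t) = ρ and every λ ≥ 0, u ≠ Tu + λ·𝟙, where 𝟙 is the constant function 1. -/
open Set MeasureTheory

/-- Index-zero lemma: under `(I⁰_ρ)`, i.e. `f_{ρ,ρ/c} > M(a,b)`, one has
`u ≠ Tu + λ·𝟙` for every `u` in the Guo cone with `min_{t∈[a,b]} u(t) = ρ`
(the boundary of `V_ρ` relative to `K`) and every `λ ≥ 0`. -/
theorem stmt_13 (f : ℝ → ℝ) (hf : ContinuousOn f (Ici 0))
    (hfpos : ∀ x ∈ Ici (0:ℝ), 0 ≤ f x)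
    (k : ℝ → ℝ → ℝ)
    (hk : ContinuousOn (fun p : ℝ × ℝ => k p.1 p.2) (Icc 0 1 ×ˢ Icc 0 1))
    (hkpos : ∀ t ∈ Icc (0:ℝ) 1, ∀ s ∈ Icc (0:ℝ) 1, 0 ≤ k t s)
    (a b c : ℝ) (ha : 0 ≤ a) (hab : a < b) (hb : b ≤ 1) (hc0 : 0 < c) (hc1 : c ≤ 1)
    (Φ : ℝ → ℝ) (hΦpos : ∀ s ∈ Icc (0:ℝ) 1, 0 ≤ Φ s)
    (hΦint : IntegrableOn Φ (Icc 0 1))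
    (hΦab : 0 < ∫ s in a..b, Φ s)
    (hkΦ : ∀ t ∈ Icc (0:ℝ) 1, ∀ s ∈ Icc (0:ℝ) 1, k t s ≤ Φ s)
    (hcΦk : ∀ t ∈ Icc a b, ∀ s ∈ Icc (0:ℝ) 1, c * Φ s ≤ k t s)
    (ρ : ℝ) (hρ : 0 < ρ)
    (hfρ : (sInf ((fun t => ∫ s in a..b, k t s) '' Icc a b))⁻¹ <
      sInf ((fun x => f x / ρ) '' Icc ρ (ρ / c))) :
    ∀ u : ℝ → ℝ, ContinuousOn u (Icc 0 1) → (∀ t ∈ Icc (0:ℝ) 1, 0 ≤ u t) →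
      c * supNorm u ≤ sInf (u '' Icc a b) → sInf (u '' Icc a b) = ρ →
      ∀ lam : ℝ, 0 ≤ lam →
        ¬ (∀ t ∈ Icc (0:ℝ) 1, u t = (∫ s in (0:ℝ)..1, k t s * f (u s)) + lam) := by
  intro u hu hupos hcone hinf lam hlam h
  have hab' : a ≤ b := hab.le
  have habI : Icc a b ⊆ Icc (0:ℝ) 1 := Icc_subset_Icc ha hb
  have hne : (Icc a b).Nonempty := nonempty_Icc.2 hab'
  -- u maps [a,b] into [ρ, ρ/c]
  have hbdA : BddAbove ((fun t => |u t|) '' Icc (0:ℝ) 1) :=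
    (isCompact_Icc.image_of_continuousOn hu.abs).bddAbove
  have hsup : ∀ s ∈ Icc (0:ℝ) 1, u s ≤ supNorm u := fun s hs =>
    (le_abs_self _).trans (le_csSup hbdA ⟨s, hs, rfl⟩)
  have hsupρ : supNorm u ≤ ρ / c := by
    rw [le_div_iff₀ hc0]
    calc supNorm u * c = c * supNorm u := mul_comm _ _
    _ ≤ sInf (u '' Icc a b) := hcone
    _ = ρ := hinf
  have hbdB : BddBelow (u '' Icc a b) := by
    refine ⟨0, ?_⟩
    rintro x ⟨s, hs, rfl⟩
    exact hupos s (habI hs)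
  have hmem : ∀ s ∈ Icc a b, u s ∈ Icc ρ (ρ / c) := fun s hs =>
    ⟨hinf ▸ csInf_le hbdB ⟨s, hs, rfl⟩, (hsup s (habI hs)).trans hsupρ⟩
  set m := sInf ((fun x => f x / ρ) '' Icc ρ (ρ / c)) with hm_def
  set IM := sInf ((fun t => ∫ s in a..b, k t s) '' Icc a b) with hIM_def
  -- continuity of slices
  have hkt : ∀ t ∈ Icc (0:ℝ) 1, ContinuousOn (fun s => k t s) (Icc (0:ℝ) 1) := by
    intro t ht
    have : ContinuousOn (fun s : ℝ => (t, s)) (Icc (0:ℝ) 1) :=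
      (continuous_const.prodMk continuous_id).continuousOn
    exact hk.comp this (fun s hs => ⟨ht, hs⟩)
  have hkint : ∀ t ∈ Icc (0:ℝ) 1, IntervalIntegrable (fun s => k t s) volume a b :=
    fun t ht => ((hkt t ht).mono habI).intervalIntegrable_of_Icc hab'
  have hΦi : IntervalIntegrable Φ volume a b := by
    rw [intervalIntegrable_iff_integrableOn_Ioc_of_le hab']
    exact hΦint.mono_set ((Ioc_subset_Icc_self).trans habI)
  -- IM is positive
  have hIMpos : 0 < IM := by
    have hbound : 0 < c * ∫ s in a..b, Φ s := mul_pos hc0 hΦab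
    refine lt_of_lt_of_le hbound (le_csInf (hne.image _) ?_)
    rintro x ⟨t, ht, rfl⟩
    have : ∫ s in a..b, c * Φ s ≤ ∫ s in a..b, k t s := by
      refine intervalIntegral.integral_mono_on hab' (hΦi.const_mul c) (hkint t (habI ht)) ?_
      intro s hs
      exact hcΦk t ht s (habI hs)
    calc c * ∫ s in a..b, Φ s = ∫ s in a..b, c * Φ s := by
          rw [intervalIntegral.integral_const_mul]
    _ ≤ ∫ s in a..b, k t s := this
  have hmpos : 0 < m := lt_trans (inv_pos.2 hIMpos) hfρ
  -- f (u s) ≥ m * ρ on [a,b]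
  have hmbd : BddBelow ((fun x => f x / ρ) '' Icc ρ (ρ / c)) := by
    refine ⟨0, ?_⟩
    rintro x ⟨y, hy, rfl⟩
    exact div_nonneg (hfpos y (le_trans hρ.le hy.1)) hρ.le
  have hfu : ∀ s ∈ Icc a b, m * ρ ≤ f (u s) := by
    intro s hs
    have h1 : m ≤ f (u s) / ρ := csInf_le hmbd ⟨u s, hmem s hs, rfl⟩
    calc m * ρ ≤ (f (u s) / ρ) * ρ := mul_le_mul_of_nonneg_right h1 hρ.le
    _ = f (u s) := div_mul_cancel₀ _ hρ.ne'
  -- continuity/integrability of the big integrand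
  have hfu_cont : ContinuousOn (fun s => f (u s)) (Icc (0:ℝ) 1) :=
    hf.comp hu (fun s hs => hupos s hs)
  have hgint : ∀ t ∈ Icc (0:ℝ) 1, IntervalIntegrable (fun s => k t s * f (u s)) volume 0 1 :=
    fun t ht => ((hkt t ht).mul hfu_cont).intervalIntegrable_of_Icc zero_le_one
  have hgint' : ∀ t ∈ Icc (0:ℝ) 1, IntervalIntegrable (fun s => k t s * f (u s)) volume a b :=
    fun t ht => (((hkt t ht).mul hfu_cont).mono habI).intervalIntegrable_of_Icc hab'
  -- main estimate: on [a,b], u t ≥ m * ρ * IM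
  have hkey : ∀ t ∈ Icc a b, m * ρ * IM ≤ u t := by
    intro t ht
    have ht1 : t ∈ Icc (0:ℝ) 1 := habI ht
    have hIMle : IM ≤ ∫ s in a..b, k t s := by
      refine csInf_le ?_ ⟨t, ht, rfl⟩
      refine ⟨0, ?_⟩
      rintro x ⟨t', ht', rfl⟩
      refine intervalIntegral.integral_nonneg hab' (fun s hs => ?_)
      exact hkpos t' (habI ht') s (habI hs)
    have h1 : (m * ρ) * ∫ s in a..b, k t s ≤ ∫ s in a..b, k t s * f (u s) := by
      have : ∫ s in a..b, k t s * (m * ρ) ≤ ∫ s in a..b, k t s * f (u s) := by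
        refine intervalIntegral.integral_mono_on hab' ((hkint t ht1).mul_const _)
          (hgint' t ht1) (fun s hs => ?_)
        exact mul_le_mul_of_nonneg_left (hfu s hs) (hkpos t ht1 s (habI hs))
      calc (m * ρ) * ∫ s in a..b, k t s = ∫ s in a..b, k t s * (m * ρ) := by
            rw [intervalIntegral.integral_mul_const, mul_comm]
      _ ≤ _ := this
    have h2 : ∫ s in a..b, k t s * f (u s) ≤ ∫ s in (0:ℝ)..1, k t s * f (u s) := by
      refine intervalIntegral.integral_mono_interval ha hab' hb ?_ (hgint t ht1)
      refine ae_restrict_of_forall_mem measurableSet_Ioc (fun s hs => ?_)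
      exact mul_nonneg (hkpos t ht1 s ⟨hs.1.le, hs.2⟩)
        (hfpos _ (hupos s ⟨hs.1.le, hs.2⟩))
    have := h t ht1
    have hmul : m * ρ * IM ≤ (m * ρ) * ∫ s in a..b, k t s :=
      mul_le_mul_of_nonneg_left hIMle (mul_nonneg hmpos.le hρ.le)
    linarith
  -- contradiction: sInf (u '' [a,b]) ≥ m * ρ * IM > ρ
  have hge : m * ρ * IM ≤ ρ := by
    conv_rhs => rw [← hinf]
    refine le_csInf (hne.image _) ?_
    rintro x ⟨t, ht, rfl⟩
    exact hkey t ht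
  have h1 : (1:ℝ) < m * IM := by
    have := mul_lt_mul_of_pos_right hfρ hIMpos
    rwa [inv_mul_cancel₀ hIMpos.ne'] at this
  nlinarith
end
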